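/- (Limits involving lower and upper functions.) Let B be a Brownian motion. If φ₁ is a continuous lower function, then limsup_{t→∞} (B_t − φ₁(t)) = ∞ almost surely; and if φ₂ is a continuous upper function, then limsup_{t→∞} (B_t − φ₂(t)) = −∞ almost surely. -/

import Mathlib

/-!
Write `X t = B t - φ t`. For levels `c' < c`, the event "`X ≤ c` eventually, yet `X > c'` at
arbitrarily large times" is null: given the increments of `B` after a time `s > 0`, which are
independent of `B s`, this event confines `B s` to an interval of length at most `2 (c - c')`,
whose `N(0, s)`-probability is `O(s^{-1/2})`. Hence almost surely either `X` exceeds every level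
at arbitrarily large times or `X → -∞`. For a lower function the second alternative would put
`ω` in the null event; an upper function makes `X` eventually nonpositive almost surely, which
rules out the first.
-/

open MeasureTheory ProbabilityTheory Filter Set
open scoped NNReal ENNReal

noncomputable section

namespace PaperNK

variable {Ω : Type*} {m : MeasurableSpace Ω}

/-- A (real-valued) process is a local martingale if there is a localizing sequence of
stopping times increasing to infinity such that every stopped process is a martingale. -/
def IsLocalMartingale (ℱ : Filtration ℝ≥0 m) (μ : Measure Ω) (X : ℝ≥0 → Ω → ℝ) : Prop :=
  ∃ σ : ℕ → Ω → ℝ≥0,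
    (∀ n, IsStoppingTime ℱ (fun ω => (σ n ω : WithTop ℝ≥0))) ∧
    (∀ ω, Tendsto (fun n => σ n ω) atTop atTop) ∧
    (∀ n, Martingale (stoppedProcess X (fun ω => (σ n ω : WithTop ℝ≥0))) ℱ μ)

/-- `X` is a local martingale on the stochastic interval `[0, ρ)`: for every stopping
time `σ` with `σ < ρ` everywhere, the stopped process `X^σ` is a local martingale. -/
def IsLocalMartingaleOn (ℱ : Filtration ℝ≥0 m) (μ : Measure Ω)
    (X : ℝ≥0 → Ω → ℝ) (ρ : Ω → ℝ≥0∞) : Prop :=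
  ∀ σ : Ω → ℝ≥0, IsStoppingTime ℱ (fun ω => (σ ω : WithTop ℝ≥0)) → (∀ ω, (σ ω : ℝ≥0∞) < ρ ω) →
    IsLocalMartingale ℱ μ (stoppedProcess X (fun ω => (σ ω : WithTop ℝ≥0)))

/-- All paths of `X` are continuous on the stochastic interval `[0, ρ)`. -/
def ContPathsOn (X : ℝ≥0 → Ω → ℝ) (ρ : Ω → ℝ≥0∞) : Prop :=
  ∀ ω, ContinuousOn (fun t => X t ω) {t : ℝ≥0 | (t : ℝ≥0∞) < ρ ω}

/-- `Q` is the quadratic variation `⟨L⟩` of the continuous local martingale `L` on the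
stochastic interval `[0, ρ)`: it starts at `0`, is adapted, nondecreasing and continuous
on `[0, ρ)`, and `L ^ 2 - Q` is a local martingale on `[0, ρ)`. -/
def IsQuadraticVariationOn (ℱ : Filtration ℝ≥0 m) (μ : Measure Ω)
    (L Q : ℝ≥0 → Ω → ℝ) (ρ : Ω → ℝ≥0∞) : Prop :=
  (∀ ω, Q 0 ω = 0) ∧ Adapted ℱ Q ∧
    (∀ ω, MonotoneOn (fun t => Q t ω) {t : ℝ≥0 | (t : ℝ≥0∞) < ρ ω}) ∧
    ContPathsOn Q ρ ∧
    IsLocalMartingaleOn ℱ μ (fun t ω => L t ω ^ 2 - Q t ω) ρ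

/-- First hitting time of the level `c` by the process `X` (with value `∞` if `c` is never hit). -/
def firstHit (X : ℝ≥0 → Ω → ℝ) (c : ℝ) (ω : Ω) : ℝ≥0∞ :=
  sInf {t : ℝ≥0∞ | ∃ s : ℝ≥0, (s : ℝ≥0∞) = t ∧ X s ω = c}

/-- The data of a continuous nonnegative local martingale `Z = 𝓔(L) = exp (L - Q / 2)` with
`Z_0 = 1`, where `L` is a continuous local martingale on `[0, T_0)` with `L_0 = 0`, `Q = ⟨L⟩`
is its quadratic variation, and `T_0` is the first hitting time of zero by `Z`; `Z` is
extended continuously (by the value `0`) after `T_0`. -/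
structure StochExpSetup (ℱ : Filtration ℝ≥0 m) (μ : Measure Ω)
    (L Q Z : ℝ≥0 → Ω → ℝ) : Prop where
  nonneg : ∀ (t : ℝ≥0) (ω : Ω), 0 ≤ Z t ω
  init : ∀ ω : Ω, Z 0 ω = 1
  contZ : ∀ ω : Ω, Continuous fun t => Z t ω
  adaptedZ : Adapted ℱ Z
  locmartZ : IsLocalMartingale ℱ μ Z
  initL : ∀ ω : Ω, L 0 ω = 0
  locmartL : IsLocalMartingaleOn ℱ μ L fun ω => firstHit Z 0 ω
  contL : ContPathsOn L fun ω => firstHit Z 0 ω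
  quadvar : IsQuadraticVariationOn ℱ μ L Q fun ω => firstHit Z 0 ω
  expEq : ∀ (t : ℝ≥0) (ω : Ω), (t : ℝ≥0∞) < firstHit Z 0 ω →
    Z t ω = Real.exp (L t ω - Q t ω / 2)
  absorbed : ∀ (t : ℝ≥0) (ω : Ω), firstHit Z 0 ω ≤ (t : ℝ≥0∞) → Z t ω = 0

/-- The class `𝒯` of stopping times: `τ ∈ 𝒯` iff `τ ≤ (T - 1/n) ⊓ n` for some `n ∈ ℕ`. -/
def MemT (ℱ : Filtration ℝ≥0 m) (T : ℝ≥0∞) (τ : Ω → ℝ≥0) : Prop :=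
  IsStoppingTime ℱ (fun ω => (τ ω : WithTop ℝ≥0)) ∧ ∃ n : ℕ, 0 < n ∧ ∀ ω, (τ ω : ℝ≥0∞) ≤ (T - 1 / n) ⊓ n

/-- `Z` is a (true) martingale on the time interval `[0, T]`. -/
def IsMartingaleOn (ℱ : Filtration ℝ≥0 m) (μ : Measure Ω)
    (Z : ℝ≥0 → Ω → ℝ) (T : ℝ≥0∞) : Prop :=
  (∀ t : ℝ≥0, (t : ℝ≥0∞) ≤ T → Integrable (Z t) μ ∧ StronglyMeasurable[ℱ t] (Z t)) ∧
  ∀ s t : ℝ≥0, s ≤ t → (t : ℝ≥0∞) ≤ T → μ[Z t|ℱ s] =ᵐ[μ] Z s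

/-- `Z` is a uniformly integrable martingale on the time interval `[0, T]`. -/
def IsUIMartingaleOn (ℱ : Filtration ℝ≥0 m) (μ : Measure Ω)
    (Z : ℝ≥0 → Ω → ℝ) (T : ℝ≥0∞) : Prop :=
  IsMartingaleOn ℱ μ Z T ∧
  UniformIntegrable (fun t : {t : ℝ≥0 // (t : ℝ≥0∞) ≤ T} => Z t.1) 1 μ

/-- `X` is a submartingale on the time interval `[0, T]`. -/
def IsSubmartingaleOn (ℱ : Filtration ℝ≥0 m) (μ : Measure Ω)
    (X : ℝ≥0 → Ω → ℝ) (T : ℝ≥0∞) : Prop :=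
  (∀ t : ℝ≥0, (t : ℝ≥0∞) ≤ T → Integrable (X t) μ ∧ StronglyMeasurable[ℱ t] (X t)) ∧
  ∀ s t : ℝ≥0, s ≤ t → (t : ℝ≥0∞) ≤ T → X s ≤ᵐ[μ] μ[X t|ℱ s]

/-- `B` is a Brownian motion (starting at zero) under `μ`: continuous paths, independent
increments, and Gaussian increments `B_t - B_s ~ N(0, t - s)`. -/
structure IsBrownianMotion {Ω' : Type*} [MeasurableSpace Ω'] (μ : Measure Ω')
    (B : ℝ≥0 → Ω' → ℝ) : Prop where
  isProb : IsProbabilityMeasure μ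
  meas : ∀ t, Measurable (B t)
  start : ∀ ω, B 0 ω = 0
  cont : ∀ ω, Continuous fun t => B t ω
  indepIncr : ∀ (n : ℕ) (t : Fin (n + 1) → ℝ≥0), Monotone t →
    iIndepFun
      (fun i : Fin n => fun ω => B (t i.succ) ω - B (t i.castSucc) ω) μ
  gaussIncr : ∀ s t : ℝ≥0, s ≤ t →
    μ.map (fun ω => B t ω - B s ω) = gaussianReal 0 (t - s)

/-- A continuous function `φ` (on `[0,∞)`) is a lower function iff
`limsup_{t → ∞} (B_t - φ(t)) = ∞` almost surely for every Brownian motion `B`. -/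
def IsLowerFunction (φ : ℝ → ℝ) : Prop :=
  ∀ (Ω' : Type) [MeasurableSpace Ω'] (μ' : Measure Ω') (B : ℝ≥0 → Ω' → ℝ),
    IsBrownianMotion μ' B →
    ∀ᵐ ω ∂μ', ∀ c : ℝ, ∃ᶠ t : ℝ≥0 in atTop, c < B t ω - φ (t : ℝ)

/-- The process `S^{L,a,φ} = exp (a L + (1/2 - a) ⟨L⟩ - |a-1| φ(⟨L⟩)) 1_{Z > 0}`. -/
def Sproc (L Q Z : ℝ≥0 → Ω → ℝ) (a : ℝ) (φ : ℝ → ℝ) (t : ℝ≥0) (ω : Ω) : ℝ :=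
  if 0 < Z t ω then Real.exp (a * L t ω + (1 / 2 - a) * Q t ω - |a - 1| * φ (Q t ω)) else 0

/-- The Novikov-Kazamaki condition `sup_{τ ∈ 𝒯} E[S^{L,a,φ}_τ] < ∞`. -/
def NKCond (ℱ : Filtration ℝ≥0 m) (μ : Measure Ω) (L Q Z : ℝ≥0 → Ω → ℝ)
    (T : ℝ≥0∞) (a : ℝ) (φ : ℝ → ℝ) : Prop :=
  (⨆ τ : {τ : Ω → ℝ≥0 // MemT ℱ T τ},
    ∫⁻ ω, ENNReal.ofReal (Sproc L Q Z a φ (τ.1 ω) ω) ∂μ) < ⊤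

/-- A Brownian motion with respect to the filtration `ℱ`: it is adapted and its
increments are independent of the past. -/
structure IsBrownianMotionFiltered (ℱ : Filtration ℝ≥0 m) (μ : Measure Ω)
    (B : ℝ≥0 → Ω → ℝ) extends IsBrownianMotion μ B : Prop where
  adapted : Adapted ℱ B
  indepPast : ∀ s t : ℝ≥0, s ≤ t →
    Indep (MeasurableSpace.comap (fun ω => B t ω - B s ω) inferInstance) (ℱ s) μ

open scoped Topology Real

lemma Finset.exists_monotone_nat_enum {α : Type*} [LinearOrder α] {T : Finset α}
    (hT : T.Nonempty) :
    ∃ (u : ℕ → α) (N : ℕ), Monotone u ∧ (∀ j, u j ∈ T) ∧ ∀ t ∈ T, ∃ j ≤ N, u j = t := by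
  have hN : T.card - 1 < T.card := Nat.sub_one_lt_of_lt hT.card_pos
  set e := T.orderEmbOfFin rfl
  refine ⟨fun j => e ⟨min j (T.card - 1), by omega⟩, T.card - 1,
    fun a b hab => e.monotone (Fin.mk_le_mk.2 (min_le_min_right _ hab)),
    fun j => T.orderEmbOfFin_mem rfl _, fun t ht => ?_⟩
  obtain ⟨i, rfl⟩ : t ∈ range e := by rwa [T.range_orderEmbOfFin]
  exact ⟨i, by omega, by simp [min_eq_left (by omega : (i : ℕ) ≤ T.card - 1)]⟩

lemma gaussianReal_Icc_le (a : ℝ) {v : ℝ≥0} (hv : v ≠ 0) (x y : ℝ) :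
    gaussianReal a v (Icc x y) ≤ ENNReal.ofReal ((y - x) / √(2 * π * v)) := by
  have hpdf : ∀ z, gaussianPDF a v z ≤ ENNReal.ofReal (√(2 * π * v))⁻¹ := fun z => by
    refine ENNReal.ofReal_le_ofReal (mul_le_of_le_one_right (by positivity) ?_)
    exact Real.exp_le_one_iff.2
      (div_nonpos_of_nonpos_of_nonneg (neg_nonpos.2 (sq_nonneg _)) (by positivity))
  calc gaussianReal a v (Icc x y) = ∫⁻ z in Icc x y, gaussianPDF a v z :=
        gaussianReal_apply a hv _
    _ ≤ ∫⁻ _ in Icc x y, ENNReal.ofReal (√(2 * π * v))⁻¹ := lintegral_mono hpdf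
    _ = ENNReal.ofReal ((y - x) / √(2 * π * v)) := by
      rw [setLIntegral_const, Real.volume_Icc, ← ENNReal.ofReal_mul (by positivity),
        div_eq_inv_mul]

lemma measure_preimage_le_of_indepFun_gaussianReal {E : Type*} [MeasurableSpace E]
    {μ : Measure Ω} [IsProbabilityMeasure μ] {Y : Ω → E} {Z : Ω → ℝ}
    (hY : Measurable Y) (hZ : Measurable Z) (hYZ : IndepFun Y Z μ) {a : ℝ} {v : ℝ≥0}
    (hv : v ≠ 0) (hZ_map : μ.map Z = gaussianReal a v) {S : Set (E × ℝ)} (hS : MeasurableSet S)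
    {ℓ : ℝ} (hSℓ : ∀ y b b', (y, b) ∈ S → (y, b') ∈ S → b' ≤ b + ℓ) :
    μ ((fun ω => (Y ω, Z ω)) ⁻¹' S) ≤ ENNReal.ofReal (2 * ℓ / √(2 * π * v)) := by
  have hslice : ∀ y,
      gaussianReal a v (Prod.mk y ⁻¹' S) ≤ ENNReal.ofReal (2 * ℓ / √(2 * π * v)) := by
    intro y
    rcases (Prod.mk y ⁻¹' S).eq_empty_or_nonempty with h | ⟨b, hb⟩
    · simp [h]
    calc gaussianReal a v (Prod.mk y ⁻¹' S) ≤ gaussianReal a v (Icc (b - ℓ) (b + ℓ)) :=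
          measure_mono fun b' hb' =>
            ⟨by linarith [hSℓ y b' b hb' hb], by linarith [hSℓ y b b' hb hb']⟩
      _ ≤ ENNReal.ofReal (2 * ℓ / √(2 * π * v)) :=
          (gaussianReal_Icc_le a hv _ _).trans_eq (by ring_nf)
  have := Measure.isProbabilityMeasure_map (μ := μ) hY.aemeasurable
  calc μ ((fun ω => (Y ω, Z ω)) ⁻¹' S) = (μ.map Y).prod (μ.map Z) S := by
        rw [← (indepFun_iff_map_prod_eq_prod_map_map hY.aemeasurable hZ.aemeasurable).1 hYZ,
          Measure.map_apply (hY.prodMk hZ) hS]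
    _ = ∫⁻ y, gaussianReal a v (Prod.mk y ⁻¹' S) ∂μ.map Y := by
        rw [hZ_map, Measure.prod_apply hS]
    _ ≤ ∫⁻ _, ENNReal.ofReal (2 * ℓ / √(2 * π * v)) ∂μ.map Y := lintegral_mono hslice
    _ = ENNReal.ofReal (2 * ℓ / √(2 * π * v)) := by simp

lemma eventually_atTop_le_iff_exists_nat_forall_rat {f : ℝ≥0 → ℝ} (hf : Continuous f)
    (s : ℝ≥0) (c : ℝ) :
    (∀ᶠ t in atTop, f t ≤ c) ↔
      ∃ m : ℕ, ∀ q : ℚ, (m : ℝ≥0) ≤ s + Real.toNNReal q → f (s + Real.toNNReal q) ≤ c := by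
  constructor
  · intro h
    obtain ⟨T, hT⟩ := eventually_atTop.1 h
    have hTm : T ≤ (⌈T⌉₊ : ℝ≥0) := Nat.le_ceil T
    exact ⟨⌈T⌉₊, fun q hq => hT _ (hTm.trans hq)⟩
  · rintro ⟨m, hm⟩
    have hdense : DenseRange fun q : ℚ => Real.toNNReal q :=
      DenseRange.comp (g := Real.toNNReal) (Function.Surjective.denseRange fun x =>
        ⟨x, Real.toNNReal_coe⟩) Rat.denseRange_cast continuous_real_toNNReal
    have hshift : Continuous fun x : ℝ≥0 => s + x := continuous_const.add continuous_id
    have hU : IsOpen {x : ℝ≥0 | (m : ℝ≥0) < s + x} := isOpen_lt continuous_const hshift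
    have hle : {x : ℝ≥0 | (m : ℝ≥0) < s + x} ⊆ {x | f (s + x) ≤ c} :=
      (Dense.open_subset_closure_inter hdense hU).trans <|
        closure_minimal (by rintro _ ⟨hx, q, rfl⟩; exact hm q hx.le)
          (isClosed_le (hf.comp hshift) continuous_const)
    filter_upwards [eventually_gt_atTop (m : ℝ≥0), eventually_ge_atTop s] with t hmt hst
    simpa [add_tsub_cancel_of_le hst] using
      hle (show t - s ∈ {x : ℝ≥0 | (m : ℝ≥0) < s + x} by simpa [add_tsub_cancel_of_le hst])

/-- The pair `(y, b)` encodes the path `t ↦ b + y q` at the rational times `t = s + q`; the set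
collects the pairs whose path eventually stays below `ψ + d` along these times. -/
def eventuallyBelow (ψ : ℝ≥0 → ℝ) (s : ℝ≥0) (d : ℝ) : Set ((ℚ → ℝ) × ℝ) :=
  {p | ∃ m : ℕ, ∀ q : ℚ, (m : ℝ≥0) ≤ s + Real.toNNReal q →
    p.2 + p.1 q - ψ (s + Real.toNNReal q) ≤ d}

lemma measurableSet_eventuallyBelow (ψ : ℝ≥0 → ℝ) (s : ℝ≥0) (d : ℝ) :
    MeasurableSet (eventuallyBelow ψ s d) := by
  simp only [eventuallyBelow, ofPred_exists, ofPred_forall]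
  refine .iUnion fun m => .iInter fun q => ?_
  by_cases hm : (m : ℝ≥0) ≤ s + Real.toNNReal q
  · simpa [hm] using measurableSet_le (by fun_prop) measurable_const
  · simp [hm]

def incrementsFrom (B : ℝ≥0 → Ω → ℝ) (s : ℝ≥0) (ω : Ω) : (ℚ → ℝ) × ℝ :=
  (fun q => B (s + Real.toNNReal q) ω - B s ω, B s ω)

lemma preimage_incrementsFrom_eventuallyBelow {B : ℝ≥0 → Ω → ℝ} {ψ : ℝ≥0 → ℝ}
    (hBψ : ∀ ω, Continuous fun t => B t ω - ψ t) (s : ℝ≥0) (d : ℝ) :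
    incrementsFrom B s ⁻¹' eventuallyBelow ψ s d = {ω | ∀ᶠ t in atTop, B t ω - ψ t ≤ d} := by
  ext ω
  rw [mem_preimage, mem_ofPred_eq, eventually_atTop_le_iff_exists_nat_forall_rat (hBψ ω) s d]
  simp [incrementsFrom, eventuallyBelow]

namespace IsBrownianMotion

variable {μ : Measure Ω} {B : ℝ≥0 → Ω → ℝ}

lemma map_eq_gaussianReal (hB : IsBrownianMotion μ B) (t : ℝ≥0) :
    μ.map (B t) = gaussianReal 0 t := by
  simpa [hB.start] using hB.gaussIncr 0 t zero_le

lemma measurable_incrementsFrom (hB : IsBrownianMotion μ B) (s : ℝ≥0) :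
    Measurable (incrementsFrom B s) :=
  (measurable_pi_lambda _ fun _ => (hB.meas _).sub (hB.meas s)).prodMk (hB.meas s)

lemma measurableSet_eventually_le (hB : IsBrownianMotion μ B) {ψ : ℝ≥0 → ℝ}
    (hψ : Continuous ψ) (d : ℝ) :
    MeasurableSet {ω | ∀ᶠ t in atTop, B t ω - ψ t ≤ d} :=
  preimage_incrementsFrom_eventuallyBelow (fun ω => (hB.cont ω).sub hψ) 0 d ▸
    (measurableSet_eventuallyBelow ψ 0 d).preimage (hB.measurable_incrementsFrom 0)

lemma indep_iSup_comap_sub_of_monotone (hB : IsBrownianMotion μ B) {u : ℕ → ℝ≥0}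
    (hu : Monotone u) (hu0 : u 0 = 0) {k N : ℕ} (hkN : k ≤ N) :
    Indep
      (⨆ j ∈ Icc k N, MeasurableSpace.comap (fun ω => B (u j) ω - B (u k) ω) inferInstance)
      (MeasurableSpace.comap (B (u k)) inferInstance) μ := by
  set d : ℕ → Ω → ℝ := fun i ω => B (u (i + 1)) ω - B (u i) ω
  have hd : iIndepFun (fun i : Fin N => d i) μ :=
    hB.indepIncr N (fun j => u j) fun _ _ h => hu h
  have hsum : ∀ j ω, ∑ i ∈ Finset.range j, d i ω = B (u j) ω := fun j ω => by
    simp [d, Finset.sum_range_sub (fun i => B (u i) ω), hu0, hB.start]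
  set mInc : Fin N → MeasurableSpace Ω := fun i => MeasurableSpace.comap (d i) inferInstance
  have hmeas : ∀ (S : Set (Fin N)) {i : ℕ} (hi : i < N), ⟨i, hi⟩ ∈ S →
      Measurable[⨆ i ∈ S, mInc i] (d i) := fun S i hi hiS =>
    (comap_measurable (d i)).mono
      (le_iSup₂ (f := fun i (_ : i ∈ S) => mInc i) ⟨i, hi⟩ hiS) le_rfl
  have hindep := indep_iSup_of_disjoint (fun i => ((hB.meas _).sub (hB.meas _)).comap_le)
    ((iIndepFun_iff_iIndep _ _ μ).1 hd) (S := {i | k ≤ (i : ℕ)}) (T := {i | (i : ℕ) < k})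
    (disjoint_left.2 fun i (hi : k ≤ (i : ℕ)) (hi' : (i : ℕ) < k) => hi'.not_ge hi)
  refine indep_of_indep_of_le_right (indep_of_indep_of_le_left hindep ?_) ?_
  · refine iSup₂_le fun j hj => Measurable.comap_le ?_
    have hj_eq : (fun ω => B (u j) ω - B (u k) ω) = fun ω => ∑ i ∈ Finset.Ico k j, d i ω :=
      funext fun ω => by rw [Finset.sum_Ico_eq_sub _ hj.1, hsum, hsum]
    rw [hj_eq]
    exact Finset.measurable_sum _ fun i hi =>
      hmeas _ ((Finset.mem_Ico.1 hi).2.trans_le hj.2) (Finset.mem_Ico.1 hi).1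
  · have hk_eq : B (u k) = fun ω => ∑ i ∈ Finset.range k, d i ω :=
      funext fun ω => (hsum k ω).symm
    rw [hk_eq]
    exact (Finset.measurable_sum _ fun i hi =>
      hmeas _ ((Finset.mem_range.1 hi).trans_le hkN) (Finset.mem_range.1 hi)).comap_le

lemma indep_iSup_comap_sub_finset (hB : IsBrownianMotion μ B) {ι : Type*} (F : Finset ι)
    {r : ι → ℝ≥0} {s : ℝ≥0} (hr : ∀ i ∈ F, s ≤ r i) :
    Indep (⨆ i ∈ F, MeasurableSpace.comap (fun ω => B (r i) ω - B s ω) inferInstance)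
      (MeasurableSpace.comap (B s) inferInstance) μ := by
  classical
  obtain ⟨u, N, hu, -, hTu⟩ :=
    Finset.exists_monotone_nat_enum (Finset.insert_nonempty 0 (insert s (F.image r)))
  have hu0 : u 0 = 0 := by
    obtain ⟨j, -, hj⟩ := hTu 0 (by simp)
    exact le_antisymm (hj ▸ hu j.zero_le) zero_le
  obtain ⟨k, hkN, hk⟩ := hTu s (by simp)
  rw [← hk]
  refine indep_of_indep_of_le_left (hB.indep_iSup_comap_sub_of_monotone hu hu0 hkN)
    (iSup₂_le fun i hi => ?_)
  obtain ⟨j, hjN, hj⟩ := hTu (r i)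
    (Finset.mem_insert_of_mem (Finset.mem_insert_of_mem (Finset.mem_image_of_mem r hi)))
  obtain ⟨j, hkj, hjN, hj⟩ : ∃ j, k ≤ j ∧ j ≤ N ∧ u j = r i := by
    rcases le_or_gt k j with hkj | hjk
    · exact ⟨j, hkj, hjN, hj⟩
    · exact ⟨k, le_rfl, hkN,
        le_antisymm (hk.trans_le (hr i hi)) (hj.symm.trans_le (hu hjk.le))⟩
  exact le_iSup₂_of_le (f := fun j (_ : j ∈ Icc k N) =>
    MeasurableSpace.comap (fun ω => B (u j) ω - B (u k) ω) inferInstance) j ⟨hkj, hjN⟩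
    (by rw [hj])

lemma indepFun_sub (hB : IsBrownianMotion μ B) {ι : Type*} {r : ι → ℝ≥0} {s : ℝ≥0}
    (hr : ∀ i, s ≤ r i) :
    IndepFun (fun ω i => B (r i) ω - B s ω) (B s) μ := by
  have := hB.isProb
  rw [IndepFun_iff_Indep, MeasurableSpace.pi, MeasurableSpace.comap_iSup]
  simp_rw [MeasurableSpace.comap_comp]
  rw [iSup_eq_iSup_finset]
  exact indep_iSup_of_directed_le (fun F => hB.indep_iSup_comap_sub_finset F fun i _ => hr i)
    (fun F => iSup₂_le fun i _ => ((hB.meas _).sub (hB.meas _)).comap_le)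
    (hB.meas s).comap_le
    (Monotone.directed_le fun _ _ h => biSup_mono fun _ hi => Finset.mem_of_subset h hi)

lemma measure_eventually_le_and_frequently_lt_le (hB : IsBrownianMotion μ B) {ψ : ℝ≥0 → ℝ}
    (hψ : Continuous ψ) (c c' : ℝ) {s : ℝ≥0} (hs : s ≠ 0) :
    μ {ω | (∀ᶠ t in atTop, B t ω - ψ t ≤ c) ∧ ∃ᶠ t in atTop, c' < B t ω - ψ t} ≤
      ENNReal.ofReal (2 * (c - c') / √(2 * π * s)) := by
  have := hB.isProb
  have hpre :=
    preimage_incrementsFrom_eventuallyBelow (B := B) (fun ω => (hB.cont ω).sub hψ) s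
  have hset : {ω | (∀ᶠ t in atTop, B t ω - ψ t ≤ c) ∧ ∃ᶠ t in atTop, c' < B t ω - ψ t} =
      incrementsFrom B s ⁻¹' (eventuallyBelow ψ s c \ eventuallyBelow ψ s c') := by
    rw [preimage_sdiff, hpre, hpre]
    ext ω
    simp only [mem_ofPred_eq, Set.mem_sdiff, not_eventually, not_le]
  rw [hset]
  refine measure_preimage_le_of_indepFun_gaussianReal
    (measurable_pi_lambda _ fun _ => (hB.meas _).sub (hB.meas s)) (hB.meas s)
    (hB.indepFun_sub fun _ => le_self_add) hs (hB.map_eq_gaussianReal s)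
    ((measurableSet_eventuallyBelow ψ s c).diff (measurableSet_eventuallyBelow ψ s c')) ?_
  -- Lowering a path by more than `c - c'` turns "eventually below `ψ + c`" into
  -- "eventually below `ψ + c'`".
  rintro y b b' ⟨-, hb⟩ ⟨⟨n, hn⟩, -⟩
  by_contra! h
  exact hb ⟨n, fun q hq => by linarith [hn q hq]⟩

lemma measure_eventually_le_and_frequently_lt (hB : IsBrownianMotion μ B) {ψ : ℝ≥0 → ℝ}
    (hψ : Continuous ψ) (c c' : ℝ) :
    μ {ω | (∀ᶠ t in atTop, B t ω - ψ t ≤ c) ∧ ∃ᶠ t in atTop, c' < B t ω - ψ t} = 0 := by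
  have hlim :
      Tendsto (fun s : ℝ≥0 => ENNReal.ofReal (2 * (c - c') / √(2 * π * s))) atTop (𝓝 0) := by
    rw [← ENNReal.ofReal_zero]
    refine ENNReal.tendsto_ofReal (tendsto_const_nhds.div_atTop ?_)
    exact Real.tendsto_sqrt_atTop.comp ((tendsto_const_mul_atTop_of_pos (by positivity)).2
      (NNReal.tendsto_coe_atTop.2 tendsto_id))
  exact nonpos_iff_eq_zero.1 (ge_of_tendsto hlim ((eventually_ne_atTop 0).mono fun s hs =>
    hB.measure_eventually_le_and_frequently_lt_le hψ c c' hs))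

lemma ae_forall_frequently_lt_or_tendsto_atBot (hB : IsBrownianMotion μ B) {ψ : ℝ≥0 → ℝ}
    (hψ : Continuous ψ) :
    ∀ᵐ ω ∂μ, (∀ c : ℝ, ∃ᶠ t in atTop, c < B t ω - ψ t) ∨
      Tendsto (fun t => B t ω - ψ t) atTop atBot := by
  have hnull : ∀ᵐ ω ∂μ, ∀ n k : ℕ,
      ¬((∀ᶠ t in atTop, B t ω - ψ t ≤ n) ∧ ∃ᶠ t in atTop, -(k : ℝ) < B t ω - ψ t) :=
    ae_all_iff.2 fun n => ae_all_iff.2 fun k =>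
      measure_eq_zero_iff_ae_notMem.1 (hB.measure_eventually_le_and_frequently_lt hψ n (-k))
  filter_upwards [hnull] with ω hω
  refine or_iff_not_imp_left.2 fun hfreq => tendsto_atBot.2 fun b => ?_
  push Not at hfreq
  obtain ⟨c, hc⟩ := hfreq
  obtain ⟨n, hn⟩ := exists_nat_ge c
  obtain ⟨k, hk⟩ := exists_nat_ge (-b)
  have hle : ∀ᶠ t in atTop, B t ω - ψ t ≤ -(k : ℝ) := by
    by_contra h
    exact hω n k
      ⟨hc.mono fun t ht => ht.trans hn, (not_eventually.1 h).mono fun t ht => not_le.1 ht⟩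
  exact hle.mono fun t ht => ht.trans (by linarith)

end IsBrownianMotion

/-- Lemma (Limits involving lower and upper functions): if `φ₁` is a continuous lower
function (the event `{B_s < φ₁(s) for all s ≥ t, for some t > 0}` has probability `0`),
then `limsup_{t → ∞} (B_t - φ₁(t)) = ∞` a.s.; if `φ₂` is a continuous upper function
(the corresponding event has probability `1`), then
`limsup_{t → ∞} (B_t - φ₂(t)) = -∞` a.s. -/
theorem lower_upper_function_limits
    {Ω : Type*} [MeasurableSpace Ω] (μ : Measure Ω) (B : ℝ≥0 → Ω → ℝ)
    (hB : IsBrownianMotion μ B) (φ₁ φ₂ : ℝ → ℝ)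
    (hφ₁cont : ContinuousOn φ₁ (Ici 0)) (hφ₂cont : ContinuousOn φ₂ (Ici 0))
    (hφ₁ : μ {ω | ∃ t : ℝ≥0, 0 < t ∧ ∀ s : ℝ≥0, t ≤ s → B s ω < φ₁ (s : ℝ)} = 0)
    (hφ₂ : μ {ω | ∃ t : ℝ≥0, 0 < t ∧ ∀ s : ℝ≥0, t ≤ s → B s ω < φ₂ (s : ℝ)} = 1) :
    (∀ᵐ ω ∂μ, ∀ c : ℝ, ∃ᶠ t : ℝ≥0 in atTop, c < B t ω - φ₁ (t : ℝ)) ∧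
    (∀ᵐ ω ∂μ, Tendsto (fun t : ℝ≥0 => B t ω - φ₂ (t : ℝ)) atTop atBot) := by
  have := hB.isProb
  have hψ₁ : Continuous fun t : ℝ≥0 => φ₁ t :=
    hφ₁cont.comp_continuous NNReal.continuous_coe fun t => t.coe_nonneg
  have hψ₂ : Continuous fun t : ℝ≥0 => φ₂ t :=
    hφ₂cont.comp_continuous NNReal.continuous_coe fun t => t.coe_nonneg
  constructor
  · filter_upwards [hB.ae_forall_frequently_lt_or_tendsto_atBot hψ₁,
      measure_eq_zero_iff_ae_notMem.1 hφ₁] with ω hω hωG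
    refine hω.resolve_right fun hbot => hωG ?_
    obtain ⟨t, ht⟩ := eventually_atTop.1 (hbot.eventually_lt_atBot 0)
    exact ⟨t ⊔ 1, zero_lt_one.trans_le le_sup_right,
      fun s hs => sub_neg.1 (ht s (le_sup_left.trans hs))⟩
  · have hle : ∀ᵐ ω ∂μ, ∀ᶠ t in atTop, B t ω - φ₂ t ≤ 0 := by
      rw [ae_iff_measure_eq (hB.measurableSet_eventually_le hψ₂ 0).nullMeasurableSet,
        measure_univ]
      refine le_antisymm prob_le_one (hφ₂ ▸ measure_mono ?_)
      rintro ω ⟨t, -, ht⟩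
      exact eventually_atTop.2 ⟨t, fun s hs => (sub_neg.2 (ht s hs)).le⟩
    filter_upwards [hB.ae_forall_frequently_lt_or_tendsto_atBot hψ₂, hle] with ω hω hω0
    refine hω.resolve_left fun hfreq => ?_
    obtain ⟨t, hpos, hnonpos⟩ := ((hfreq 0).and_eventually hω0).exists
    exact hpos.not_ge hnonpos

end PaperNK
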